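/- For any matrix W ∈ ℝ^{(a₁b₁)×(a₂b₂)} and any R̂ ≥ 1, the minimum over factor matrices {A_r}, {B_r} of ‖W − Σ_{r=1}^{R̂} A_r ⊗ B_r‖²_F equals the sum of the squared singular values of the rearranged matrix R(W) beyond index R̂, i.e., Σ_{r>R̂} σ_r(R(W))². -/

import Mathlib

open Kronecker Matrix Finset

/-- Squared Frobenius norm of a real matrix. -/
def frobSq {m n : Type*} [Fintype m] [Fintype n] (M : Matrix m n ℝ) : ℝ :=
  ∑ i, ∑ j, (M i j) ^ 2

/-- The Van Loan–Pitsianis rearrangement sending `A ⊗ B` to `vec(A) vec(B)ᵀ`. -/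
def rearrange {a₁ a₂ b₁ b₂ : ℕ}
    (W : Matrix (Fin a₁ × Fin b₁) (Fin a₂ × Fin b₂) ℝ) :
    Matrix (Fin a₁ × Fin a₂) (Fin b₁ × Fin b₂) ℝ :=
  fun p q => W (p.1, q.1) (p.2, q.2)

/-- `Σ_{r ≥ R̂} σ_r(M)²` : the sum of the squared singular values of `M` beyond index `R̂`
(zero-based), i.e. the tail of the decreasingly sorted eigenvalues of `MᴴM`. -/
noncomputable def tailSqSingular {p q : ℕ} (M : Matrix (Fin p) (Fin q) ℝ) (Rhat : ℕ) : ℝ :=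
  let ev : Fin q → ℝ := (Matrix.isHermitian_conjTranspose_mul_self M).eigenvalues
  ∑ r ∈ Finset.univ.filter (fun r : Fin q => Rhat ≤ (r : ℕ)), ev (Tuple.sort ev r.rev)

/-!
The rearrangement `R` preserves Frobenius norms and turns `Σ_r A_r ⊗ B_r` into
`Σ_r vec(A_r) vec(B_r)ᵀ`, an arbitrary matrix of rank at most `R̂`; so the theorem is the
Eckart–Young theorem for `M = R(W)`.

Let `w_j` be an orthonormal eigenbasis of `MᵀM` with eigenvalues `μ₀ ≥ μ₁ ≥ ⋯`, so that
`‖M x‖² = Σ_j μ_j ⟪w_j, x⟫²`. Keeping the top `k` directions, `X = Σ_{j<k} (M w_j) w_jᵀ`, leaves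
the error `Σ_{j≥k} μ_j`. Conversely, if `X = Σ_{r<k} u_r v_rᵀ` and `(c_l)` is an orthonormal basis
of `span {v_r}`, every row of `X` lies in that span, so row by row
`‖M - X‖² ≥ ‖M‖² - Σ_l ‖M c_l‖²`. Finally `Σ_l ‖M c_l‖² = Σ_j μ_j t_j` with
`t_j = Σ_l ⟪c_l, w_j⟫² ∈ [0, 1]` (Bessel) and `Σ_j t_j ≤ k`, so it is at most
`μ₀ + ⋯ + μ_{k-1}` (Ky Fan).
-/

open scoped RealInnerProductSpace

theorem Antitone.sum_mul_le_sum_filter_lt {q k : ℕ} {μ t : Fin q → ℝ} (hμ : Antitone μ)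
    (hμ0 : ∀ j, 0 ≤ μ j) (ht0 : ∀ j, 0 ≤ t j) (ht1 : ∀ j, t j ≤ 1) (hsum : ∑ j, t j ≤ k) :
    ∑ j, μ j * t j ≤ ∑ j ∈ univ.filter (fun j : Fin q => ↑j < k), μ j := by
  rcases le_or_gt q k with hqk | hkq
  · rw [filter_true_of_mem fun j _ => j.isLt.trans_le hqk]
    exact sum_le_sum fun j _ => mul_le_of_le_one_right (hμ0 j) (ht1 j)
  set c := μ ⟨k, hkq⟩
  have hterm : ∀ j : Fin q, μ j * t j ≤
      (if (j : ℕ) < k then μ j else 0) + c * (t j - if (j : ℕ) < k then 1 else 0) := by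
    intro j
    split_ifs with hj
    · have : c ≤ μ j := hμ (Fin.le_def.mpr hj.le)
      nlinarith [ht1 j]
    · have : μ j ≤ c := hμ (Fin.le_def.mpr (not_lt.mp hj))
      nlinarith [ht0 j]
  have hcard : ∑ j : Fin q, (if (j : ℕ) < k then (1 : ℝ) else 0) = k := by
    rw [sum_boole, Fin.card_filter_val_lt, min_eq_right hkq.le]
  calc ∑ j, μ j * t j
      ≤ ∑ j : Fin q, ((if (j : ℕ) < k then μ j else 0) +
          c * (t j - if (j : ℕ) < k then 1 else 0)) := sum_le_sum fun j _ => hterm j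
    _ = ∑ j ∈ univ.filter (fun j : Fin q => ↑j < k), μ j + c * (∑ j, t j - k) := by
      rw [sum_add_distrib, sum_ite, sum_const_zero, add_zero, ← mul_sum, sum_sub_distrib, hcard]
    _ ≤ ∑ j ∈ univ.filter (fun j : Fin q => ↑j < k), μ j := by
      nlinarith [hμ0 ⟨k, hkq⟩]

section InnerProductSpace

variable {E F : Type*} [NormedAddCommGroup E] [InnerProductSpace ℝ E]
  [NormedAddCommGroup F] [InnerProductSpace ℝ F]

theorem OrthonormalBasis.norm_sq_sub_sum_inner_sq_le_norm_sub_sq {ι : Type*} [Fintype ι]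
    {K : Submodule ℝ E} (c : OrthonormalBasis ι ℝ K) (y : E) {x : E} (hx : x ∈ K) :
    ‖y‖ ^ 2 - ∑ l, ⟪(c l : E), y⟫ ^ 2 ≤ ‖y - x‖ ^ 2 := by
  have hc : Orthonormal ℝ fun l => (c l : E) := c.orthonormal.comp_linearIsometry K.subtypeₗᵢ
  set a : ι → ℝ := fun l => ⟪(c l : E), x⟫
  have hxa : x = ∑ l, a l • (c l : E) := by
    simpa [a] using congrArg Subtype.val (c.sum_repr' ⟨x, hx⟩).symm
  have hxy : ⟪y, x⟫ = ∑ l, a l * ⟪(c l : E), y⟫ := by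
    simp [hxa, inner_sum, real_inner_smul_right, real_inner_comm]
  have hxx : ‖x‖ ^ 2 = ∑ l, a l ^ 2 := by
    rw [← real_inner_self_eq_norm_sq, hxa, hc.inner_sum]
    simp [sq]
  have hsq : 0 ≤ ∑ l, (a l - ⟪(c l : E), y⟫) ^ 2 := sum_nonneg fun l _ => sq_nonneg _
  simp only [sub_sq, sum_add_distrib, sum_sub_distrib, mul_assoc, ← mul_sum] at hsq
  rw [norm_sub_sq_real, hxy, hxx]
  linarith

variable [FiniteDimensional ℝ E] [FiniteDimensional ℝ F] (T : E →ₗ[ℝ] F)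

theorem inner_apply_eigenvector_apply {ι : Type*} [Fintype ι] (w : OrthonormalBasis ι ℝ E)
    {μ : ι → ℝ} (hw : ∀ j, T.adjoint (T (w j)) = μ j • w j) (j : ι) (x : E) :
    ⟪T (w j), T x⟫ = μ j * ⟪w j, x⟫ := by
  rw [← LinearMap.adjoint_inner_left, hw, real_inner_smul_left]

theorem norm_sq_apply_eq_sum_mul_inner_sq {ι : Type*} [Fintype ι] (w : OrthonormalBasis ι ℝ E)
    {μ : ι → ℝ} (hw : ∀ j, T.adjoint (T (w j)) = μ j • w j) (x : E) :
    ‖T x‖ ^ 2 = ∑ j, μ j * ⟪w j, x⟫ ^ 2 := by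
  calc ‖T x‖ ^ 2 = ⟪T (∑ j, ⟪w j, x⟫ • w j), T x⟫ := by
        rw [w.sum_repr', real_inner_self_eq_norm_sq]
    _ = ∑ j, μ j * ⟪w j, x⟫ ^ 2 := by
        simp only [map_sum, map_smul, sum_inner, real_inner_smul_left,
          inner_apply_eigenvector_apply T w hw]
        exact sum_congr rfl fun j _ => by ring

theorem eigenvalue_eq_norm_sq_apply {ι : Type*} [Fintype ι] (w : OrthonormalBasis ι ℝ E)
    {μ : ι → ℝ} (hw : ∀ j, T.adjoint (T (w j)) = μ j • w j) (j : ι) :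
    μ j = ‖T (w j)‖ ^ 2 := by
  rw [← real_inner_self_eq_norm_sq, inner_apply_eigenvector_apply T w hw,
    real_inner_self_eq_norm_sq, w.norm_eq_one, one_pow, mul_one]

theorem sum_norm_sq_apply_orthonormal_le {q k : ℕ} (w : OrthonormalBasis (Fin q) ℝ E)
    {μ : Fin q → ℝ} (hμ : Antitone μ) (hw : ∀ j, T.adjoint (T (w j)) = μ j • w j)
    {κ : Type*} [Fintype κ] {c : κ → E} (hc : Orthonormal ℝ c) (hck : Fintype.card κ ≤ k) :
    ∑ l, ‖T (c l)‖ ^ 2 ≤ ∑ j ∈ univ.filter (fun j : Fin q => ↑j < k), μ j := by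
  set t : Fin q → ℝ := fun j => ∑ l, ⟪c l, w j⟫ ^ 2
  have hsum : ∑ l, ‖T (c l)‖ ^ 2 = ∑ j, μ j * t j := by
    simp only [norm_sq_apply_eq_sum_mul_inner_sq T w hw, t, mul_sum, real_inner_comm (c _)]
    exact sum_comm
  have ht1 : ∀ j, t j ≤ 1 := fun j => by
    simpa [t, w.norm_eq_one] using hc.sum_inner_products_le (w j) (s := univ)
  have htk : ∑ j, t j ≤ k := by
    simp only [t]
    rw [sum_comm]
    simp only [w.sum_sq_inner_left, hc.norm_eq_one, one_pow, sum_const, card_univ, nsmul_eq_mul,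
      mul_one]
    exact_mod_cast hck
  rw [hsum]
  exact hμ.sum_mul_le_sum_filter_lt
    (fun j => (eigenvalue_eq_norm_sq_apply T w hw j).symm ▸ sq_nonneg _)
    (fun j => sum_nonneg fun l _ => sq_nonneg _) ht1 htk

end InnerProductSpace

section Frobenius

variable {m n : Type*} [Fintype m] [Fintype n]

theorem frobSq_eq_sum_norm_sq_row (N : Matrix m n ℝ) :
    frobSq N = ∑ i, ‖WithLp.toLp 2 (N.row i)‖ ^ 2 := by
  simp [frobSq, EuclideanSpace.norm_sq_eq]

variable [DecidableEq n]

theorem norm_sq_toEuclideanLin_apply (N : Matrix m n ℝ) (x : EuclideanSpace ℝ n) :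
    ‖N.toEuclideanLin x‖ ^ 2 = ∑ i, ⟪WithLp.toLp 2 (N.row i), x⟫ ^ 2 := by
  simp only [toLpLin_apply, EuclideanSpace.norm_sq_eq, mulVec, dotProduct_comm,
    Real.norm_eq_abs, sq_abs, EuclideanSpace.inner_eq_star_dotProduct, star_trivial]
  rfl

theorem frobSq_eq_sum_norm_sq_toEuclideanLin {ι : Type*} [Fintype ι] (N : Matrix m n ℝ)
    (b : OrthonormalBasis ι ℝ (EuclideanSpace ℝ n)) :
    frobSq N = ∑ j, ‖N.toEuclideanLin (b j)‖ ^ 2 := by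
  simp_rw [frobSq_eq_sum_norm_sq_row, norm_sq_toEuclideanLin_apply, ← b.sum_sq_inner_left]
  exact sum_comm

end Frobenius

section EckartYoung

variable {m : Type*} [Fintype m] {q : ℕ} (M : Matrix m (Fin q) ℝ)
  (w : OrthonormalBasis (Fin q) ℝ (EuclideanSpace ℝ (Fin q))) {μ : Fin q → ℝ}

theorem sum_filter_le_frobSq_sub_sum_vecMulVec (hμ : Antitone μ)
    (hw : ∀ j, M.toEuclideanLin.adjoint (M.toEuclideanLin (w j)) = μ j • w j)
    {k : ℕ} (u : Fin k → m → ℝ) (v : Fin k → Fin q → ℝ) :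
    ∑ j ∈ univ.filter (fun j : Fin q => k ≤ ↑j), μ j ≤
      frobSq (M - ∑ r, vecMulVec (u r) (v r)) := by
  set K := Submodule.span ℝ (Set.range fun r => WithLp.toLp 2 (v r))
  let c := stdOrthonormalBasis ℝ K
  have hc : Orthonormal ℝ fun l => (c l : EuclideanSpace ℝ (Fin q)) :=
    c.orthonormal.comp_linearIsometry K.subtypeₗᵢ
  have hcard : Fintype.card (Fin (Module.finrank ℝ K)) ≤ k := by
    rw [Fintype.card_fin]
    exact (finrank_range_le_card (R := ℝ) fun r => WithLp.toLp 2 (v r)).trans_eq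
      (Fintype.card_fin k)
  have hrow : ∀ i, WithLp.toLp 2 ((∑ r, vecMulVec (u r) (v r)).row i) ∈ K := fun i => by
    have : (∑ r, vecMulVec (u r) (v r)).row i = ∑ r, u r i • v r := by
      ext j; simp [row_apply, Matrix.sum_apply, vecMulVec_apply]
    rw [this, WithLp.toLp_sum]
    exact sum_mem fun r _ => K.smul_mem _ (Submodule.subset_span ⟨r, rfl⟩)
  have hdist : frobSq M - ∑ l, ‖M.toEuclideanLin (c l)‖ ^ 2 ≤
      frobSq (M - ∑ r, vecMulVec (u r) (v r)) := by
    simp only [frobSq_eq_sum_norm_sq_row, norm_sq_toEuclideanLin_apply]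
    rw [sum_comm, ← sum_sub_distrib]
    refine sum_le_sum fun i _ => ?_
    rw [show (M - ∑ r, vecMulVec (u r) (v r)).row i =
      M.row i - (∑ r, vecMulVec (u r) (v r)).row i from rfl, WithLp.toLp_sub]
    simp only [real_inner_comm (c _ : EuclideanSpace ℝ (Fin q))]
    exact c.norm_sq_sub_sum_inner_sq_le_norm_sub_sq _ (hrow i)
  have htotal : frobSq M = ∑ j, μ j := by
    simp [frobSq_eq_sum_norm_sq_toEuclideanLin M w, eigenvalue_eq_norm_sq_apply _ w hw]
  have := sum_norm_sq_apply_orthonormal_le _ w hμ hw hc hcard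
  rw [← sum_filter_add_sum_filter_not univ (fun j : Fin q => ↑j < k)] at htotal
  simp only [not_lt] at htotal
  linarith

theorem exists_frobSq_sub_sum_vecMulVec_eq
    (hw : ∀ j, M.toEuclideanLin.adjoint (M.toEuclideanLin (w j)) = μ j • w j) (k : ℕ) :
    ∃ (u : Fin k → m → ℝ) (v : Fin k → Fin q → ℝ),
      frobSq (M - ∑ r, vecMulVec (u r) (v r)) =
        ∑ j ∈ univ.filter (fun j : Fin q => k ≤ ↑j), μ j := by
  -- the eigenvectors of the `k` largest eigenvalues, padded with zeros when `k > q`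
  set e : ℕ → Fin q → ℝ := fun n => if h : n < q then WithLp.ofLp (w ⟨n, h⟩) else 0
  refine ⟨fun r => M *ᵥ e r, fun r => e r, ?_⟩
  have he : ∀ (r : Fin k) (j : Fin q),
      e r ⬝ᵥ WithLp.ofLp (w j) = if (r : ℕ) = j then 1 else 0 := by
    intro r j
    by_cases h : (r : ℕ) < q
    · have := w.inner_eq_ite j ⟨r, h⟩
      rw [EuclideanSpace.inner_eq_star_dotProduct, star_trivial] at this
      simp only [e, dif_pos h, this, Fin.ext_iff, eq_comm]
    · have : (r : ℕ) ≠ j := fun hrj => h (hrj ▸ j.isLt)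
      simp [e, h, this]
  have happly : ∀ j : Fin q,
      (M - ∑ r : Fin k, vecMulVec (M *ᵥ e r) (e r)).toEuclideanLin (w j) =
        if k ≤ (j : ℕ) then M.toEuclideanLin (w j) else 0 := by
    intro j
    apply WithLp.ofLp_injective
    simp only [toEuclideanLin, Matrix.ofLp_toLpLin, toLin'_apply, sub_mulVec, sum_mulVec,
      vecMulVec_mulVec, he, op_smul_eq_smul, ite_smul, one_smul, zero_smul]
    rw [Fin.sum_univ_eq_sum_range (fun n => if n = j then M *ᵥ e n else 0), sum_ite_eq']
    simp only [mem_range]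
    have hej : e j = WithLp.ofLp (w j) := dif_pos j.isLt
    by_cases hjk : k ≤ (j : ℕ)
    · rw [if_neg (not_lt.mpr hjk), if_pos hjk, sub_zero, Matrix.ofLp_toLpLin, toLin'_apply]
    · rw [if_pos (not_le.mp hjk), if_neg hjk, hej, sub_self, WithLp.ofLp_zero]
  rw [frobSq_eq_sum_norm_sq_toEuclideanLin _ w, sum_filter]
  refine sum_congr rfl fun j _ => ?_
  rw [happly]
  split_ifs
  · exact (eigenvalue_eq_norm_sq_apply _ w hw j).symm
  · simp

end EckartYoung

theorem exists_sorted_eigenbasis {p q : ℕ} (M : Matrix (Fin p) (Fin q) ℝ) :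
    ∃ (w : OrthonormalBasis (Fin q) ℝ (EuclideanSpace ℝ (Fin q))) (μ : Fin q → ℝ),
      Antitone μ ∧ (∀ j, M.toEuclideanLin.adjoint (M.toEuclideanLin (w j)) = μ j • w j) ∧
      ∀ k, tailSqSingular M k = ∑ j ∈ univ.filter (fun j : Fin q => k ≤ ↑j), μ j := by
  let hH := isHermitian_conjTranspose_mul_self M
  let σ : Equiv.Perm (Fin q) := Fin.revPerm.trans (Tuple.sort hH.eigenvalues)
  refine ⟨hH.eigenvectorBasis.reindex σ.symm, hH.eigenvalues ∘ σ,
    fun i j hij => Tuple.monotone_sort _ (Fin.rev_le_rev.mpr hij), fun j => ?_, fun k => rfl⟩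
  rw [← toEuclideanLin_conjTranspose_eq_adjoint]
  apply WithLp.ofLp_injective
  simp only [toEuclideanLin, Matrix.ofLp_toLpLin, toLin'_apply, mulVec_mulVec,
    OrthonormalBasis.reindex_apply, Equiv.symm_symm, Function.comp_apply, WithLp.ofLp_smul]
  exact hH.mulVec_eigenvectorBasis (σ j)

theorem isLeast_frobSq_sub_sum_vecMulVec {p q : ℕ} (M : Matrix (Fin p) (Fin q) ℝ) (k : ℕ) :
    IsLeast {E : ℝ | ∃ (u : Fin k → Fin p → ℝ) (v : Fin k → Fin q → ℝ),
        E = frobSq (M - ∑ r, vecMulVec (u r) (v r))}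
      (tailSqSingular M k) := by
  obtain ⟨w, μ, hμ, hw, htail⟩ := exists_sorted_eigenbasis M
  rw [htail]
  refine ⟨?_, ?_⟩
  · obtain ⟨u, v, h⟩ := exists_frobSq_sub_sum_vecMulVec_eq M w hw k
    exact ⟨u, v, h.symm⟩
  · rintro _ ⟨u, v, rfl⟩
    exact sum_filter_le_frobSq_sub_sum_vecMulVec M w hμ hw u v

def vecEquiv (a b : ℕ) : Matrix (Fin a) (Fin b) ℝ ≃ (Fin (a * b) → ℝ) :=
  (Equiv.curry (Fin a) (Fin b) ℝ).symm.trans (finProdFinEquiv.arrowCongr (Equiv.refl ℝ))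

theorem frobSq_reindex {m n m' n' : Type*} [Fintype m] [Fintype n] [Fintype m'] [Fintype n']
    (e₁ : m ≃ m') (e₂ : n ≃ n') (X : Matrix m n ℝ) :
    frobSq (reindex e₁ e₂ X) = frobSq X :=
  Fintype.sum_equiv e₁.symm _ _ fun _ => Fintype.sum_equiv e₂.symm _ _ fun _ => rfl

theorem frobSq_rearrange {a₁ a₂ b₁ b₂ : ℕ} (W : Matrix (Fin a₁ × Fin b₁) (Fin a₂ × Fin b₂) ℝ) :
    frobSq (rearrange W) = frobSq W := by
  simp only [frobSq, rearrange, Fintype.sum_prod_type]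
  exact sum_congr rfl fun _ _ => sum_comm

theorem frobSq_sub_sum_kronecker {a₁ a₂ b₁ b₂ k : ℕ}
    (W : Matrix (Fin a₁ × Fin b₁) (Fin a₂ × Fin b₂) ℝ)
    (A : Fin k → Matrix (Fin a₁) (Fin a₂) ℝ) (B : Fin k → Matrix (Fin b₁) (Fin b₂) ℝ) :
    frobSq (W - ∑ r, A r ⊗ₖ B r) =
      frobSq (reindex finProdFinEquiv finProdFinEquiv (rearrange W) -
        ∑ r, vecMulVec (vecEquiv a₁ a₂ (A r)) (vecEquiv b₁ b₂ (B r))) := by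
  rw [← frobSq_rearrange, ← frobSq_reindex finProdFinEquiv finProdFinEquiv]
  congr 1
  ext i j
  simp only [reindex_apply, submatrix_apply, rearrange, Matrix.sub_apply, Matrix.sum_apply,
    kroneckerMap_apply, vecMulVec_apply]
  rfl

theorem kron_low_rank_approximation_error_general {a₁ a₂ b₁ b₂ Rhat : ℕ}
    (W : Matrix (Fin a₁ × Fin b₁) (Fin a₂ × Fin b₂) ℝ) :
    IsLeast
      {E : ℝ | ∃ (A : Fin Rhat → Matrix (Fin a₁) (Fin a₂) ℝ)
          (B : Fin Rhat → Matrix (Fin b₁) (Fin b₂) ℝ),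
          E = frobSq (W - ∑ r, A r ⊗ₖ B r)}
      (tailSqSingular
        (Matrix.reindex finProdFinEquiv finProdFinEquiv (rearrange W)) Rhat) := by
  convert isLeast_frobSq_sub_sum_vecMulVec
    (reindex finProdFinEquiv finProdFinEquiv (rearrange W)) Rhat using 1
  ext E
  simp only [Set.mem_ofPred_eq, frobSq_sub_sum_kronecker]
  constructor
  · rintro ⟨A, B, rfl⟩
    exact ⟨_, _, rfl⟩
  · rintro ⟨u, v, rfl⟩
    exact ⟨fun r => (vecEquiv _ _).symm (u r), fun r => (vecEquiv _ _).symm (v r), by simp⟩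

/-- Eckart–Young for Kronecker sums: for any `W` and `R̂ ≥ 1`, the minimum of
`‖W − Σ_{r=1}^{R̂} A_r ⊗ B_r‖²_F` over factor matrices equals
`Σ_{r > R̂} σ_r(R(W))²`, the sum of squared singular values of the rearranged matrix
beyond index `R̂` (and the minimum is attained). -/
theorem kron_low_rank_approximation_error {a₁ a₂ b₁ b₂ Rhat : ℕ} (hR : 1 ≤ Rhat)
    (W : Matrix (Fin a₁ × Fin b₁) (Fin a₂ × Fin b₂) ℝ) :
    IsLeast
      {E : ℝ | ∃ (A : Fin Rhat → Matrix (Fin a₁) (Fin a₂) ℝ)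
          (B : Fin Rhat → Matrix (Fin b₁) (Fin b₂) ℝ),
          E = frobSq (W - ∑ r, A r ⊗ₖ B r)}
      (tailSqSingular
        (Matrix.reindex finProdFinEquiv finProdFinEquiv (rearrange W)) Rhat) :=
  kron_low_rank_approximation_error_general W
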